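/- arXiv:math/0703795 — 9 statements merged into one kernel-verified Lean document; each statement's English description precedes it below -/
import Mathlib

section
/- Let g be a complex (n+m)×(n+m) matrix satisfying gᴴ·J·g = J, where J = diag(I_n, −I_m), written in block form g = [[A, B], [C, D]] with A of size n×n and D of size m×m. If z is an n×m complex matrix such that I_n − z·zᴴ is positive semidefinite, then the matrix C·z + D is invertible. -/
open Matrix
open scoped ComplexOrder

private lemma aux1 {p q : ℕ} (w : Matrix (Fin p) (Fin q) ℂ) (u : Fin p → ℂ) :
    star u ⬝ᵥ ((w * wᴴ) *ᵥ u) = star (wᴴ *ᵥ u) ⬝ᵥ (wᴴ *ᵥ u) := by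
  rw [← Matrix.mulVec_mulVec, Matrix.dotProduct_mulVec, Matrix.star_mulVec,
    Matrix.conjTranspose_conjTranspose]

private lemma aux2 {p q : ℕ} (w : Matrix (Fin p) (Fin q) ℂ) (t : Fin q → ℂ) :
    star (w *ᵥ t) ⬝ᵥ (w *ᵥ t) = star t ⬝ᵥ (wᴴ *ᵥ (w *ᵥ t)) := by
  rw [Matrix.star_mulVec, ← Matrix.dotProduct_mulVec]

private lemma dot_eq_normsq {k : ℕ} (x : Fin k → ℂ) :
    star x ⬝ᵥ x = (‖(WithLp.equiv 2 (Fin k → ℂ)).symm x‖ : ℂ) ^ 2 := by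
  rw [WithLp.equiv_symm_apply, dotProduct_comm, ← EuclideanSpace.inner_toLp_toLp,
    inner_self_eq_norm_sq_to_K]
  norm_cast

/-- For `g ∈ U(n,m)` written in block form `g = [[A, B], [C, D]]` (with `A` of size `n×n`
and `D` of size `m×m`), i.e. satisfying `gᴴ·J·g = J` with `J = diag(I_n, −I_m)`, and any
`n×m` complex matrix `z` with `I_n − z·zᴴ` positive semidefinite, the matrix `C·z + D`
is invertible. -/
theorem czd_invertible (n m : ℕ) (hm : 1 ≤ m) (hmn : m ≤ n)
    (A : Matrix (Fin n) (Fin n) ℂ) (B : Matrix (Fin n) (Fin m) ℂ)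
    (C : Matrix (Fin m) (Fin n) ℂ) (D : Matrix (Fin m) (Fin m) ℂ)
    (hg : (Matrix.fromBlocks A B C D)ᴴ * Matrix.fromBlocks 1 0 0 (-1) *
        Matrix.fromBlocks A B C D = Matrix.fromBlocks 1 0 0 (-1))
    (z : Matrix (Fin n) (Fin m) ℂ)
    (hz : (1 - z * zᴴ).PosSemidef) :
    IsUnit (C * z + D) := by
  set g := Matrix.fromBlocks A B C D with hgdef
  set J : Matrix (Fin n ⊕ Fin m) (Fin n ⊕ Fin m) ℂ := Matrix.fromBlocks 1 0 0 (-1) with hJ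
  have hJJ : J * J = 1 := by
    rw [hJ, Matrix.fromBlocks_multiply]
    simp [← Matrix.fromBlocks_one]
  have hinv : (J * gᴴ * J) * g = 1 := by
    calc (J * gᴴ * J) * g = J * (gᴴ * J * g) := by simp only [Matrix.mul_assoc]
    _ = J * J := by rw [hg]
    _ = 1 := hJJ
  -- injectivity of mulVec by g
  have hginj : ∀ u : Fin n ⊕ Fin m → ℂ, g *ᵥ u = 0 → u = 0 := by
    intro u hu
    calc u = 1 *ᵥ u := by simp
    _ = ((J * gᴴ * J) * g) *ᵥ u := by rw [hinv]
    _ = (J * gᴴ * J) *ᵥ (g *ᵥ u) := by rw [Matrix.mulVec_mulVec]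
    _ = 0 := by rw [hu, Matrix.mulVec_zero]
  rw [Matrix.isUnit_iff_isUnit_det, isUnit_iff_ne_zero]
  intro hdet
  obtain ⟨v, hv, hMv⟩ := (Matrix.exists_mulVec_eq_zero_iff).2 hdet
  apply hv
  set a : Fin n → ℂ := z *ᵥ v with ha
  set x : Fin n → ℂ := A *ᵥ a + B *ᵥ v with hx
  have hbot : C *ᵥ a + D *ᵥ v = 0 := by
    rw [ha, Matrix.mulVec_mulVec, ← Matrix.add_mulVec, hMv]
  have hgu : g *ᵥ Sum.elim a v = Sum.elim x 0 := by
    rw [hgdef, Matrix.fromBlocks_mulVec]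
    simp [hbot, hx]
  -- key identity: star x ⬝ᵥ x = star a ⬝ᵥ a - star v ⬝ᵥ v
  have key : star x ⬝ᵥ x = star a ⬝ᵥ a - star v ⬝ᵥ v := by
    have h1 : star (Sum.elim a v) ⬝ᵥ ((gᴴ * J * g) *ᵥ Sum.elim a v)
        = star (Sum.elim a v) ⬝ᵥ (J *ᵥ Sum.elim a v) := by rw [hg]
    have h2 : (gᴴ * J * g) *ᵥ Sum.elim a v = gᴴ *ᵥ (J *ᵥ (g *ᵥ Sum.elim a v)) := by
      simp only [← Matrix.mulVec_mulVec]
    have h3 : ∀ (p : Fin n → ℂ) (q : Fin m → ℂ),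
        star (Sum.elim p q) ⬝ᵥ (J *ᵥ Sum.elim p q) = star p ⬝ᵥ p - star q ⬝ᵥ q := by
      intro p q
      rw [hJ, Matrix.fromBlocks_mulVec, Function.star_sumElim,
        sumElim_dotProduct_sumElim]
      simp [Matrix.neg_mulVec, sub_eq_add_neg]
    have h4 : star (Sum.elim a v) ⬝ᵥ (gᴴ *ᵥ (J *ᵥ (g *ᵥ Sum.elim a v)))
        = star (g *ᵥ Sum.elim a v) ⬝ᵥ (J *ᵥ (g *ᵥ Sum.elim a v)) := by
      rw [Matrix.dotProduct_mulVec, ← Matrix.star_mulVec]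
    rw [h2, h4, hgu, h3, h3] at h1
    simpa using h1
  -- norms
  set b : Fin m → ℂ := zᴴ *ᵥ a with hb
  set na : ℝ := ‖(WithLp.equiv 2 (Fin n → ℂ)).symm a‖ with hna
  set nv : ℝ := ‖(WithLp.equiv 2 (Fin m → ℂ)).symm v‖ with hnv
  set nb : ℝ := ‖(WithLp.equiv 2 (Fin m → ℂ)).symm b‖ with hnb
  -- from hz : star b ⬝ᵥ b ≤ star a ⬝ᵥ a
  have hba : (nb : ℂ) ^ 2 ≤ (na : ℂ) ^ 2 := by
    have := hz.dotProduct_mulVec_nonneg a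
    rw [Matrix.sub_mulVec, dotProduct_sub, Matrix.one_mulVec, sub_nonneg] at this
    have hrw : star a ⬝ᵥ ((z * zᴴ) *ᵥ a) = star b ⬝ᵥ b := by
      rw [hb]; exact aux1 z a
    rw [hrw, dot_eq_normsq, dot_eq_normsq] at this
    exact this
  have hba' : nb ≤ na := by
    have h1 : nb ^ 2 ≤ na ^ 2 := by exact_mod_cast hba
    nlinarith [norm_nonneg ((WithLp.equiv 2 (Fin n → ℂ)).symm a),
      norm_nonneg ((WithLp.equiv 2 (Fin m → ℂ)).symm b)]
  -- star a ⬝ᵥ a = star v ⬝ᵥ b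
  have hav : star a ⬝ᵥ a = star v ⬝ᵥ b := by
    rw [hb, ha]; exact aux2 z v
  -- Cauchy-Schwarz : na^2 ≤ nv * nb
  have hCS : na ^ 2 ≤ nv * nb := by
    have h1 : star a ⬝ᵥ a = (na : ℂ) ^ 2 := dot_eq_normsq a
    have h2 : ‖star v ⬝ᵥ b‖ ≤ nv * nb := by
      rw [dotProduct_comm, ← EuclideanSpace.inner_toLp_toLp]
      exact norm_inner_le_norm _ _
    calc na ^ 2 = ‖(na : ℂ) ^ 2‖ := by
          rw [norm_pow, Complex.norm_real, Real.norm_eq_abs, abs_of_nonneg (norm_nonneg _)]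
    _ = ‖star v ⬝ᵥ b‖ := by rw [← h1, hav]
    _ ≤ nv * nb := h2
  have hnale : na ^ 2 ≤ nv ^ 2 := by
    nlinarith [sq_nonneg (na - nv), mul_le_mul_of_nonneg_left hba'
        (norm_nonneg ((WithLp.equiv 2 (Fin m → ℂ)).symm v)),
      norm_nonneg ((WithLp.equiv 2 (Fin n → ℂ)).symm a),
      norm_nonneg ((WithLp.equiv 2 (Fin m → ℂ)).symm v)]
  -- hence star x ⬝ᵥ x ≤ 0
  have hxle : star x ⬝ᵥ x ≤ 0 := by
    rw [key, sub_nonpos, dot_eq_normsq, dot_eq_normsq]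
    exact_mod_cast hnale
  have hxzero : x = 0 :=
    dotProduct_star_self_eq_zero.1 (le_antisymm hxle (dotProduct_star_self_nonneg x))
  have huzero : Sum.elim a v = 0 := by
    apply hginj
    rw [hgu, hxzero]
    ext (i | j) <;> simp
  ext j
  exact congr_fun huzero (Sum.inr j)
end

section
/- Let g ∈ SU(n,m) with block form g = [[A, B], [C, D]] (A of size n×n), and let z, w be n×m complex matrices with I_n − z·zᴴ and I_n − w·wᴴ positive definite (so that C·z + D and C·w + D are invertible). Then det(I_n − g(z)·(g(w))ᴴ) · det(C·z + D) · conj(det(C·w + D)) = det(I_n − z·wᴴ). Equivalently, the kernel h(z,w) = det(I_n − z·wᴴ) transforms under the action of SU(n,m) by the factor of automorphy det(C·z + D)⁻¹ on the left and its conjugate on the right. -/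
open Matrix
open scoped ComplexOrder

/-- For `g ∈ SU(n,m)` with block form `g = [[A, B], [C, D]]` (A of size n×n), and `z`, `w`
in the bounded domain `𝒟 = {z : I_n − z·zᴴ > 0}` (so that `C·z + D` and `C·w + D` are
invertible), the kernel `h(z,w) = det(I_n − z·wᴴ)` satisfies
`det(I_n − g(z)·(g(w))ᴴ) · det(C·z + D) · conj (det(C·w + D)) = det(I_n − z·wᴴ)`. -/
theorem kernel_transformation (n m : ℕ) (hm : 1 ≤ m) (hmn : m ≤ n)
    (A : Matrix (Fin n) (Fin n) ℂ) (B : Matrix (Fin n) (Fin m) ℂ)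
    (C : Matrix (Fin m) (Fin n) ℂ) (D : Matrix (Fin m) (Fin m) ℂ)
    (hg : (Matrix.fromBlocks A B C D)ᴴ * Matrix.fromBlocks 1 0 0 (-1) *
        Matrix.fromBlocks A B C D = Matrix.fromBlocks 1 0 0 (-1))
    (hdet : (Matrix.fromBlocks A B C D).det = 1)
    (z w : Matrix (Fin n) (Fin m) ℂ)
    (hz : (1 - z * zᴴ).PosDef) (hw : (1 - w * wᴴ).PosDef)
    (hz' : IsUnit (C * z + D)) (hw' : IsUnit (C * w + D)) :
    (1 - ((A * z + B) * (C * z + D)⁻¹) * ((A * w + B) * (C * w + D)⁻¹)ᴴ).det *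
        (C * z + D).det * (starRingEnd ℂ) ((C * w + D).det) =
      (1 - z * wᴴ).det := by
  -- extract block relations from g ∈ U(n,m)
  have hb := hg
  rw [Matrix.fromBlocks_conjTranspose, Matrix.fromBlocks_multiply,
    Matrix.fromBlocks_multiply] at hb
  have h11 := congrArg Matrix.toBlocks₁₁ hb
  have h12 := congrArg Matrix.toBlocks₁₂ hb
  have h21 := congrArg Matrix.toBlocks₂₁ hb
  have h22 := congrArg Matrix.toBlocks₂₂ hb
  simp only [Matrix.toBlocks_fromBlocks₁₁, Matrix.toBlocks_fromBlocks₁₂,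
    Matrix.toBlocks_fromBlocks₂₁, Matrix.toBlocks_fromBlocks₂₂,
    Matrix.mul_one, Matrix.one_mul, Matrix.mul_neg, Matrix.mul_zero, Matrix.zero_mul,
    add_zero, zero_add] at h11 h12 h21 h22
  rw [Matrix.neg_mul, ← sub_eq_add_neg, sub_eq_iff_eq_add] at h11 h22
  rw [Matrix.neg_mul, ← sub_eq_add_neg] at h12 h21
  rw [sub_eq_zero] at h12 h21
  -- pointwise forms
  have e11 : ∀ x : Matrix (Fin n) (Fin m) ℂ, Aᴴ * (A * x) = x + Cᴴ * (C * x) := fun x => by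
    rw [← Matrix.mul_assoc, h11, Matrix.add_mul, Matrix.one_mul, Matrix.mul_assoc]
  have e21 : ∀ x : Matrix (Fin n) (Fin m) ℂ, Bᴴ * (A * x) = Dᴴ * (C * x) := fun x => by
    rw [← Matrix.mul_assoc, h21, Matrix.mul_assoc]
  -- key identity
  have key : (C * w + D)ᴴ * (C * z + D) - (A * w + B)ᴴ * (A * z + B) = 1 - wᴴ * z := by
    simp only [conjTranspose_add, conjTranspose_mul, Matrix.add_mul, Matrix.mul_add,
      Matrix.mul_assoc, e11, e21, h12, h22]
    abel
  -- inverse facts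
  have hZ : (C * z + D) * (C * z + D)⁻¹ = 1 :=
    Matrix.mul_nonsing_inv _ ((Matrix.isUnit_iff_isUnit_det _).mp hz')
  have hZ' : (C * z + D)⁻¹ * (C * z + D) = 1 :=
    Matrix.nonsing_inv_mul _ ((Matrix.isUnit_iff_isUnit_det _).mp hz')
  have hW' : (C * w + D)⁻¹ * (C * w + D) = 1 :=
    Matrix.nonsing_inv_mul _ ((Matrix.isUnit_iff_isUnit_det _).mp hw')
  have hWH : (C * w + D)ᴴ * ((C * w + D)⁻¹)ᴴ = 1 := by
    rw [← conjTranspose_mul, hW', conjTranspose_one]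
  -- main matrix identity
  have hid : (C * w + D)ᴴ *
      (1 - ((A * w + B) * (C * w + D)⁻¹)ᴴ * ((A * z + B) * (C * z + D)⁻¹)) * (C * z + D)
      = 1 - wᴴ * z := by
    rw [conjTranspose_mul]
    calc (C * w + D)ᴴ *
        (1 - ((C * w + D)⁻¹)ᴴ * (A * w + B)ᴴ * ((A * z + B) * (C * z + D)⁻¹)) * (C * z + D)
        = (C * w + D)ᴴ * (C * z + D) -
          ((C * w + D)ᴴ * ((C * w + D)⁻¹)ᴴ) * (A * w + B)ᴴ * (A * z + B) *
            ((C * z + D)⁻¹ * (C * z + D)) := by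
          simp only [Matrix.mul_sub, Matrix.sub_mul, Matrix.mul_one, Matrix.mul_assoc]
      _ = (C * w + D)ᴴ * (C * z + D) - (A * w + B)ᴴ * (A * z + B) := by
          rw [hWH, hZ', Matrix.one_mul, Matrix.mul_one]
      _ = 1 - wᴴ * z := key
  -- take determinants
  have hdid := congrArg Matrix.det hid
  rw [Matrix.det_mul, Matrix.det_mul, Matrix.det_conjTranspose] at hdid
  have hswap : (1 - ((A * z + B) * (C * z + D)⁻¹) * ((A * w + B) * (C * w + D)⁻¹)ᴴ).det
      = (1 - ((A * w + B) * (C * w + D)⁻¹)ᴴ * ((A * z + B) * (C * z + D)⁻¹)).det :=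
    Matrix.det_one_sub_mul_comm _ _
  have hswap2 : (1 - z * wᴴ).det = (1 - wᴴ * z).det := Matrix.det_one_sub_mul_comm _ _
  rw [hswap, hswap2, ← hdid]
  simp only [Complex.star_def]
  ring
end

section
/- Let g ∈ SU(n,m) with block form g = [[A, B], [C, D]] (A of size n×n), and let z be an n×m complex matrix with I_n − z·zᴴ positive definite. Then I_n − g(z)·(g(z))ᴴ is positive definite; i.e., the action of SU(n,m) maps the domain 𝒟 = { z : I_n − z·zᴴ > 0 } into itself. -/
open Matrix
open scoped ComplexOrder

set_option linter.unusedSectionVars false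
set_option linter.unusedVariables false

section Aux
variable {k l : Type*} [Fintype k] [Fintype l] [DecidableEq k] [DecidableEq l]

lemma inner_piLp_equiv_symm_aux {ι : Type*} [Fintype ι] (x y : ι → ℂ) :
    inner ℂ ((WithLp.equiv 2 (ι → ℂ)).symm x) ((WithLp.equiv 2 (ι → ℂ)).symm y) = star x ⬝ᵥ y := by
  rw [dotProduct_comm]; rfl

lemma dp_eq_norm_sq (v : k → ℂ) :
    star v ⬝ᵥ v = ((‖(WithLp.equiv 2 (k → ℂ)).symm v‖ ^ 2 : ℝ) : ℂ) := by
  rw [← inner_piLp_equiv_symm_aux, inner_self_eq_norm_sq_to_K]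
  norm_cast

lemma psd_transfer (u : Matrix k l ℂ) (h : (1 - uᴴ * u).PosSemidef) :
    (1 - u * uᴴ).PosSemidef := by
  refine PosSemidef.of_dotProduct_mulVec_nonneg ?_ ?_
  · simp [Matrix.IsHermitian, conjTranspose_sub, conjTranspose_mul]
  intro x
  have hsy : star x ᵥ* u = star (uᴴ *ᵥ x) := by
    have := star_mulVec uᴴ x
    rw [conjTranspose_conjTranspose] at this
    exact this.symm
  have hsw : star (uᴴ *ᵥ x) ᵥ* uᴴ = star (u *ᵥ (uᴴ *ᵥ x)) :=
    (star_mulVec u (uᴴ *ᵥ x)).symm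
  have key1 : star x ⬝ᵥ (u * uᴴ) *ᵥ x = star (uᴴ *ᵥ x) ⬝ᵥ (uᴴ *ᵥ x) := by
    rw [← mulVec_mulVec, dotProduct_mulVec, hsy]
  have key2 : star (uᴴ *ᵥ x) ⬝ᵥ (uᴴ * u) *ᵥ (uᴴ *ᵥ x)
      = star (u *ᵥ (uᴴ *ᵥ x)) ⬝ᵥ (u *ᵥ (uᴴ *ᵥ x)) := by
    rw [← mulVec_mulVec, dotProduct_mulVec, hsw]
  have key3 : star (uᴴ *ᵥ x) ⬝ᵥ (uᴴ *ᵥ x) = star x ⬝ᵥ (u *ᵥ (uᴴ *ᵥ x)) := by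
    symm
    rw [dotProduct_mulVec (star x) u, hsy]
  have h2 := h.dotProduct_mulVec_nonneg (uᴴ *ᵥ x)
  rw [sub_mulVec, dotProduct_sub, one_mulVec, key2, sub_nonneg,
    dp_eq_norm_sq, dp_eq_norm_sq, Complex.real_le_real] at h2
  rw [sub_mulVec, dotProduct_sub, one_mulVec, key1, sub_nonneg,
    dp_eq_norm_sq, dp_eq_norm_sq, Complex.real_le_real]
  set a : ℝ := ‖(WithLp.equiv 2 (k → ℂ)).symm x‖ with hadef
  set b : ℝ := ‖(WithLp.equiv 2 (l → ℂ)).symm (uᴴ *ᵥ x)‖ with hbdef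
  set c : ℝ := ‖(WithLp.equiv 2 (k → ℂ)).symm (u *ᵥ (uᴴ *ᵥ x))‖ with hcdef
  have ha : (0:ℝ) ≤ a := norm_nonneg _
  have hb : (0:ℝ) ≤ b := norm_nonneg _
  have hcb : c ≤ b := by
    nlinarith [sq_nonneg (b - c), sq_nonneg (b + c), norm_nonneg ((WithLp.equiv 2 (k → ℂ)).symm (u *ᵥ (uᴴ *ᵥ x)))]
  -- Cauchy–Schwarz : b^2 ≤ a * c
  have hcs : b ^ 2 ≤ a * c := by
    have := norm_inner_le_norm (𝕜 := ℂ) ((WithLp.equiv 2 (k → ℂ)).symm x)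
      ((WithLp.equiv 2 (k → ℂ)).symm (u *ᵥ (uᴴ *ᵥ x)))
    rw [inner_piLp_equiv_symm_aux, ← key3, dp_eq_norm_sq] at this
    calc b ^ 2 = ‖((b ^ 2 : ℝ) : ℂ)‖ := by
          rw [Complex.norm_real]; exact (abs_of_nonneg (by positivity)).symm
      _ ≤ a * c := this
  nlinarith [mul_le_mul_of_nonneg_left hcb ha]

lemma posDef_of_psd_det {M : Matrix k k ℂ} (h : M.PosSemidef) (hd : M.det ≠ 0) :
    M.PosDef := by
  refine PosDef.of_dotProduct_mulVec_pos h.1 (fun x hx => ?_)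
  rcases lt_or_eq_of_le (h.dotProduct_mulVec_nonneg x) with h' | h'
  · exact h'
  · exact absurd ((Matrix.exists_mulVec_eq_zero_iff).mp
      ⟨x, hx, (h.dotProduct_mulVec_zero_iff x).mp h'.symm⟩) hd

lemma transfer (u : Matrix k l ℂ) (h : (1 - uᴴ * u).PosDef) : (1 - u * uᴴ).PosDef := by
  apply posDef_of_psd_det (psd_transfer u h.posSemidef)
  rw [det_one_sub_mul_comm]
  exact h.det_pos.ne'

lemma posDef_conj {M : Matrix k k ℂ} (h : M.PosDef) (N : Matrix k k ℂ)
    (hN : N.det ≠ 0) : (Nᴴ * M * N).PosDef := by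
  apply posDef_of_psd_det (h.posSemidef.conjTranspose_mul_mul_same N)
  rw [det_mul, det_mul, det_conjTranspose]
  exact mul_ne_zero (mul_ne_zero (star_ne_zero.mpr hN) h.det_pos.ne') hN

end Aux


/-- For `g ∈ SU(n,m)` with block form `g = [[A, B], [C, D]]` (A of size n×n), and `z` an
`n×m` complex matrix with `I_n − z·zᴴ` positive definite, the image
`g(z) = (A·z + B)·(C·z + D)⁻¹` again satisfies that `I_n − g(z)·(g(z))ᴴ` is positive
definite: the action of `SU(n,m)` maps the domain `𝒟` into itself. -/
theorem action_preserves_domain (n m : ℕ) (hm : 1 ≤ m) (hmn : m ≤ n)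
    (A : Matrix (Fin n) (Fin n) ℂ) (B : Matrix (Fin n) (Fin m) ℂ)
    (C : Matrix (Fin m) (Fin n) ℂ) (D : Matrix (Fin m) (Fin m) ℂ)
    (hg : (Matrix.fromBlocks A B C D)ᴴ * Matrix.fromBlocks 1 0 0 (-1) *
        Matrix.fromBlocks A B C D = Matrix.fromBlocks 1 0 0 (-1))
    (hdet : (Matrix.fromBlocks A B C D).det = 1)
    (z : Matrix (Fin n) (Fin m) ℂ)
    (hz : (1 - z * zᴴ).PosDef) :
    (1 - ((A * z + B) * (C * z + D)⁻¹) * ((A * z + B) * (C * z + D)⁻¹)ᴴ).PosDef := by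
  -- notation
  set g : Matrix (Fin n ⊕ Fin m) (Fin n ⊕ Fin m) ℂ := Matrix.fromBlocks A B C D with hgdef
  set J : Matrix (Fin n ⊕ Fin m) (Fin n ⊕ Fin m) ℂ := Matrix.fromBlocks 1 0 0 (-1) with hJdef
  set E : Matrix (Fin n ⊕ Fin m) (Fin m) ℂ := fromRows z 1 with hEdef
  set P : Matrix (Fin n) (Fin m) ℂ := A * z + B with hPdef
  set Q : Matrix (Fin m) (Fin m) ℂ := C * z + D with hQdef
  -- 1 - zᴴ z is positive definite
  have hz' : (1 - zᴴ * z).PosDef := by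
    have := transfer zᴴ (by rwa [conjTranspose_conjTranspose])
    rwa [conjTranspose_conjTranspose] at this
  -- key identity
  have hgE : g * E = fromRows P Q := by
    rw [hgdef, hEdef, fromBlocks_mul_fromRows, Matrix.mul_one, Matrix.mul_one]
  have hJgE : J * (g * E) = fromRows P (-Q) := by
    rw [hgE, hJdef, fromBlocks_mul_fromRows]
    simp
  have lhs_eq : Eᴴ * (gᴴ * J * g) * E = Pᴴ * P - Qᴴ * Q := by
    have h1 : Eᴴ * (gᴴ * J * g) * E = (g * E)ᴴ * (J * (g * E)) := by
      simp only [conjTranspose_mul, Matrix.mul_assoc]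
    rw [h1, hJgE, hgE, conjTranspose_fromRows_eq_fromCols_conjTranspose,
      fromCols_mul_fromRows]
    simp [Matrix.mul_neg, sub_eq_add_neg]
  have rhs_eq : Eᴴ * J * E = zᴴ * z - 1 := by
    have hJE : J * E = fromRows z (-1) := by
      rw [hEdef, hJdef, fromBlocks_mul_fromRows]
      simp
    rw [Matrix.mul_assoc, hJE, hEdef, conjTranspose_fromRows_eq_fromCols_conjTranspose,
      fromCols_mul_fromRows]
    simp [Matrix.mul_neg, sub_eq_add_neg]
  have key : Pᴴ * P - Qᴴ * Q = zᴴ * z - 1 := by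
    rw [← lhs_eq, hg, rhs_eq]
  have key' : Qᴴ * Q - Pᴴ * P = 1 - zᴴ * z := by
    have := congrArg Neg.neg key
    simpa [neg_sub] using this
  -- Q is invertible
  have hQQ : (Qᴴ * Q).PosDef := by
    have hQQ_eq : Qᴴ * Q = (1 - zᴴ * z) + Pᴴ * P := by
      rw [← key']
      abel
    rw [hQQ_eq]
    exact hz'.add_posSemidef (posSemidef_conjTranspose_mul_self P)
  have hdQ : Q.det ≠ 0 := by
    have h0 : (Qᴴ * Q).det ≠ 0 := hQQ.det_pos.ne'
    rw [det_mul, det_conjTranspose] at h0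
    exact fun h => h0 (by rw [h, mul_zero])
  have hQ2 : Q * Q⁻¹ = 1 := mul_nonsing_inv _ (isUnit_iff_ne_zero.mpr hdQ)
  have hQ1 : (Q⁻¹)ᴴ * Qᴴ = 1 := by
    rw [← conjTranspose_mul, hQ2, conjTranspose_one]
  have hdQi : (Q⁻¹).det ≠ 0 := by
    rw [det_nonsing_inv]
    simpa using hdQ
  -- congruence
  have h3 : (Q⁻¹)ᴴ * (1 - zᴴ * z) * Q⁻¹ = 1 - (P * Q⁻¹)ᴴ * (P * Q⁻¹) := by
    rw [← key', Matrix.mul_sub, Matrix.sub_mul]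
    congr 1
    · rw [← Matrix.mul_assoc, hQ1, Matrix.one_mul, hQ2]
    · simp only [conjTranspose_mul, Matrix.mul_assoc]
  have himg : (1 - (P * Q⁻¹)ᴴ * (P * Q⁻¹)).PosDef := by
    rw [← h3]
    exact posDef_conj hz' _ hdQi
  exact transfer (P * Q⁻¹) himg
end

section
/- Let g, g' ∈ SU(n,m), with block forms g = [[A, B], [C, D]] and g' = [[A', B'], [C', D']] (top-left blocks of size n×n), and let z be an n×m complex matrix with I_n − z·zᴴ positive definite. Then C'·z + D' is invertible, C·g'(z) + D is invertible, the (2,1) and (2,2) blocks C'', D'' of the product g·g' satisfy that C''·z + D'' is invertible, and (g·g')(z) = g(g'(z)); i.e., the fractional linear maps define an action of SU(n,m) on the domain 𝒟. -/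
open Matrix
open scoped ComplexOrder

private lemma posDef_conj_of_injective {k l : ℕ} {M : Matrix (Fin k) (Fin k) ℂ} (hM : M.PosDef)
    {Q : Matrix (Fin k) (Fin l) ℂ} (hQ : Function.Injective Q.mulVec) :
    (Qᴴ * M * Q).PosDef := by
  refine Matrix.PosDef.of_dotProduct_mulVec_pos (Matrix.isHermitian_conjTranspose_mul_mul Q hM.1) fun x hx => ?_
  have hQx : Q *ᵥ x ≠ 0 := fun h => hx (hQ (by simpa using h))
  simpa only [star_mulVec, Matrix.dotProduct_mulVec, Matrix.vecMul_vecMul, Matrix.mul_assoc]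
    using hM.dotProduct_mulVec_pos hQx

/-- transfer: `1 - zzᴴ` posdef implies `1 - zᴴz` posdef. -/
private lemma posDef_flip {k l : ℕ} (z : Matrix (Fin k) (Fin l) ℂ)
    (hz : (1 - z * zᴴ).PosDef) : (1 - zᴴ * z).PosDef := by
  have hW : ((1 - z * zᴴ)⁻¹).PosDef := hz.inv
  set W := (1 - z * zᴴ)⁻¹ with hWdef
  have hWu : (1 - z * zᴴ) * W = 1 := by
    exact Matrix.mul_nonsing_inv _ ((Matrix.isUnit_iff_isUnit_det _).mp hz.isUnit)
  have hzW : z * zᴴ * W = W - 1 := by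
    rw [Matrix.sub_mul, Matrix.one_mul] at hWu
    rw [← hWu]; abel
  have key : (1 - zᴴ * z) * (1 + zᴴ * W * z) = 1 := by
    have expand : (1 - zᴴ * z) * (1 + zᴴ * W * z)
        = 1 + zᴴ * W * z - zᴴ * z - zᴴ * (z * (zᴴ * W) * z) := by
      simp only [Matrix.mul_add, Matrix.add_mul, Matrix.sub_mul, Matrix.mul_sub,
        Matrix.mul_one, Matrix.one_mul, Matrix.mul_assoc]
      abel
    rw [expand, ← Matrix.mul_assoc z zᴴ W, hzW]
    simp only [Matrix.mul_sub, Matrix.sub_mul, Matrix.mul_one, Matrix.one_mul,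
      Matrix.mul_assoc]
    abel
  have hP : (1 + zᴴ * W * z).PosDef :=
    Matrix.PosDef.add_posSemidef Matrix.PosDef.one (hW.posSemidef.conjTranspose_mul_mul_same z)
  rw [(Matrix.inv_eq_left_inv key).symm]
  exact hP.inv

private lemma key_identity {k l : ℕ}
    (A : Matrix (Fin k) (Fin k) ℂ) (B : Matrix (Fin k) (Fin l) ℂ)
    (C : Matrix (Fin l) (Fin k) ℂ) (D : Matrix (Fin l) (Fin l) ℂ)
    (h11 : Aᴴ * A - Cᴴ * C = 1) (h12 : Aᴴ * B - Cᴴ * D = 0)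
    (h21 : Bᴴ * A - Dᴴ * C = 0) (h22 : Bᴴ * B - Dᴴ * D = -1)
    (z : Matrix (Fin k) (Fin l) ℂ) :
    (C * z + D)ᴴ * (C * z + D) - (A * z + B)ᴴ * (A * z + B) = 1 - zᴴ * z := by
  have expand : (C * z + D)ᴴ * (C * z + D) - (A * z + B)ᴴ * (A * z + B)
      = -(zᴴ * ((Aᴴ * A - Cᴴ * C) * z)) - zᴴ * (Aᴴ * B - Cᴴ * D)
        - (Bᴴ * A - Dᴴ * C) * z - (Bᴴ * B - Dᴴ * D) := by
    simp only [conjTranspose_add, conjTranspose_mul, Matrix.mul_add, Matrix.add_mul,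
      Matrix.sub_mul, Matrix.mul_sub, Matrix.mul_assoc]
    abel
  rw [expand, h11, h12, h21, h22]
  simp only [Matrix.one_mul, Matrix.mul_zero, Matrix.zero_mul]
  abel

private lemma blocks_of_rel {k l : ℕ}
    {A : Matrix (Fin k) (Fin k) ℂ} {B : Matrix (Fin k) (Fin l) ℂ}
    {C : Matrix (Fin l) (Fin k) ℂ} {D : Matrix (Fin l) (Fin l) ℂ}
    (hg : (Matrix.fromBlocks A B C D)ᴴ * Matrix.fromBlocks 1 0 0 (-1) *
        Matrix.fromBlocks A B C D = Matrix.fromBlocks 1 0 0 (-1)) :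
    Aᴴ * A - Cᴴ * C = 1 ∧ Aᴴ * B - Cᴴ * D = 0 ∧ Bᴴ * A - Dᴴ * C = 0 ∧
      Bᴴ * B - Dᴴ * D = -1 := by
  rw [Matrix.fromBlocks_conjTranspose, Matrix.fromBlocks_multiply,
    Matrix.fromBlocks_multiply] at hg
  simp only [Matrix.mul_one, Matrix.mul_zero, add_zero, zero_add,
    Matrix.mul_neg, Matrix.neg_mul] at hg
  have h11 := congrArg Matrix.toBlocks₁₁ hg
  have h12 := congrArg Matrix.toBlocks₁₂ hg
  have h21 := congrArg Matrix.toBlocks₂₁ hg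
  have h22 := congrArg Matrix.toBlocks₂₂ hg
  simp only [Matrix.toBlocks_fromBlocks₁₁, Matrix.toBlocks_fromBlocks₁₂,
    Matrix.toBlocks_fromBlocks₂₁, Matrix.toBlocks_fromBlocks₂₂] at h11 h12 h21 h22
  refine ⟨?_, ?_, ?_, ?_⟩
  · rw [← h11]; abel
  · rw [← h12]; abel
  · rw [← h21]; abel
  · rw [← h22]; abel

/-- `C z + D` is invertible when `1 - zᴴ z` is posdef. -/
private lemma isUnit_CD {k l : ℕ}
    {A : Matrix (Fin k) (Fin k) ℂ} {B : Matrix (Fin k) (Fin l) ℂ}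
    {C : Matrix (Fin l) (Fin k) ℂ} {D : Matrix (Fin l) (Fin l) ℂ}
    (hg : (Matrix.fromBlocks A B C D)ᴴ * Matrix.fromBlocks 1 0 0 (-1) *
        Matrix.fromBlocks A B C D = Matrix.fromBlocks 1 0 0 (-1))
    (z : Matrix (Fin k) (Fin l) ℂ) (hz : (1 - zᴴ * z).PosDef) :
    IsUnit (C * z + D) := by
  obtain ⟨h11, h12, h21, h22⟩ := blocks_of_rel hg
  have key := key_identity A B C D h11 h12 h21 h22 z
  have hpd : ((C * z + D)ᴴ * (C * z + D)).PosDef := by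
    have : (C * z + D)ᴴ * (C * z + D)
        = (A * z + B)ᴴ * (A * z + B) + (1 - zᴴ * z) := by
      rw [← key]; abel
    rw [this]
    exact Matrix.PosDef.posSemidef_add (Matrix.posSemidef_conjTranspose_mul_self _) hz
  rw [Matrix.isUnit_iff_isUnit_det]
  have hdet : ((C * z + D)ᴴ * (C * z + D)).det ≠ 0 := hpd.det_pos.ne'
  rw [Matrix.det_mul] at hdet
  exact (IsUnit.mul_iff.mp hdet.isUnit).2

/-- For `g, g' ∈ SU(n,m)` with block forms `[[A, B], [C, D]]` and `[[A', B'], [C', D']]`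
and `z` in the domain `𝒟`: `C'·z + D'` is invertible, `C·g'(z) + D` is invertible, the
(2,1) and (2,2) blocks `C'' = C·A' + D·C'`, `D'' = C·B' + D·D'` of the product `g·g'`
satisfy that `C''·z + D''` is invertible, and `(g·g')(z) = g(g'(z))`: the fractional
linear maps define an action of `SU(n,m)` on `𝒟`. -/
theorem mobius_action (n m : ℕ) (hm : 1 ≤ m) (hmn : m ≤ n)
    (A A' : Matrix (Fin n) (Fin n) ℂ) (B B' : Matrix (Fin n) (Fin m) ℂ)
    (C C' : Matrix (Fin m) (Fin n) ℂ) (D D' : Matrix (Fin m) (Fin m) ℂ)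
    (hg : (Matrix.fromBlocks A B C D)ᴴ * Matrix.fromBlocks 1 0 0 (-1) *
        Matrix.fromBlocks A B C D = Matrix.fromBlocks 1 0 0 (-1))
    (hdet : (Matrix.fromBlocks A B C D).det = 1)
    (hg' : (Matrix.fromBlocks A' B' C' D')ᴴ * Matrix.fromBlocks 1 0 0 (-1) *
        Matrix.fromBlocks A' B' C' D' = Matrix.fromBlocks 1 0 0 (-1))
    (hdet' : (Matrix.fromBlocks A' B' C' D').det = 1)
    (z : Matrix (Fin n) (Fin m) ℂ)
    (hz : (1 - z * zᴴ).PosDef) :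
    IsUnit (C' * z + D') ∧
    IsUnit (C * ((A' * z + B') * (C' * z + D')⁻¹) + D) ∧
    IsUnit ((C * A' + D * C') * z + (C * B' + D * D')) ∧
    ((A * A' + B * C') * z + (A * B' + B * D')) *
        ((C * A' + D * C') * z + (C * B' + D * D'))⁻¹ =
      (A * ((A' * z + B') * (C' * z + D')⁻¹) + B) *
        (C * ((A' * z + B') * (C' * z + D')⁻¹) + D)⁻¹ := by
  have hz' : (1 - zᴴ * z).PosDef := posDef_flip z hz
  have hQ : IsUnit (C' * z + D') := isUnit_CD hg' z hz'
  set Q := C' * z + D' with hQdef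
  set P := A' * z + B' with hPdef
  have hQdet : IsUnit Q.det := (Matrix.isUnit_iff_isUnit_det _).mp hQ
  have hQQ : Q * Q⁻¹ = 1 := Matrix.mul_nonsing_inv _ hQdet
  have hQQ' : Q⁻¹ * Q = 1 := Matrix.nonsing_inv_mul _ hQdet
  set w := P * Q⁻¹ with hwdef
  obtain ⟨h11, h12, h21, h22⟩ := blocks_of_rel hg'
  have key' := key_identity A' B' C' D' h11 h12 h21 h22 z
  have hconj : 1 - wᴴ * w = (Q⁻¹)ᴴ * (1 - zᴴ * z) * Q⁻¹ := by
    have h1 : (1 : Matrix (Fin m) (Fin m) ℂ) = (Q⁻¹)ᴴ * (Qᴴ * Q) * Q⁻¹ := by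
      rw [show (Q⁻¹)ᴴ * (Qᴴ * Q) * Q⁻¹ = (Q * Q⁻¹)ᴴ * (Q * Q⁻¹) by
        simp only [conjTranspose_mul, Matrix.mul_assoc]]
      rw [hQQ]; simp
    have h2 : wᴴ * w = (Q⁻¹)ᴴ * (Pᴴ * P) * Q⁻¹ := by
      rw [hwdef]; simp only [conjTranspose_mul, Matrix.mul_assoc]
    rw [h2]
    calc 1 - (Q⁻¹)ᴴ * (Pᴴ * P) * Q⁻¹
        = (Q⁻¹)ᴴ * (Qᴴ * Q) * Q⁻¹ - (Q⁻¹)ᴴ * (Pᴴ * P) * Q⁻¹ := by rw [← h1]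
      _ = (Q⁻¹)ᴴ * (Qᴴ * Q - Pᴴ * P) * Q⁻¹ := by
          simp only [Matrix.mul_sub, Matrix.sub_mul]
      _ = (Q⁻¹)ᴴ * (1 - zᴴ * z) * Q⁻¹ := by rw [key']
  have hw : (1 - wᴴ * w).PosDef := by
    rw [hconj]
    exact posDef_conj_of_injective hz'
      (Matrix.mulVec_injective_iff_isUnit.mpr (Matrix.isUnit_nonsing_inv_iff.mpr hQ))
  have hCw : IsUnit (C * w + D) := isUnit_CD hg w hw
  have hS : (C * A' + D * C') * z + (C * B' + D * D') = (C * w + D) * Q := by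
    have e : (C * w + D) * Q = C * (P * (Q⁻¹ * Q)) + D * Q := by
      rw [hwdef]
      simp only [Matrix.add_mul, Matrix.mul_assoc]
    rw [e, hQQ', Matrix.mul_one, hPdef, hQdef]
    simp only [Matrix.mul_add, Matrix.add_mul, Matrix.mul_assoc]
    abel
  have hR : (A * A' + B * C') * z + (A * B' + B * D') = (A * w + B) * Q := by
    have e : (A * w + B) * Q = A * (P * (Q⁻¹ * Q)) + B * Q := by
      rw [hwdef]
      simp only [Matrix.add_mul, Matrix.mul_assoc]
    rw [e, hQQ', Matrix.mul_one, hPdef, hQdef]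
    simp only [Matrix.mul_add, Matrix.add_mul, Matrix.mul_assoc]
    abel
  have hSu : IsUnit ((C * A' + D * C') * z + (C * B' + D * D')) := by
    rw [hS]; exact hCw.mul hQ
  refine ⟨hQ, hCw, hSu, ?_⟩
  rw [hR, hS, Matrix.mul_inv_rev]
  rw [show (A * w + B) * Q * (Q⁻¹ * (C * w + D)⁻¹)
      = (A * w + B) * (Q * Q⁻¹) * (C * w + D)⁻¹ by simp only [Matrix.mul_assoc], hQQ,
    Matrix.mul_one]
end

section
/- For all integers n ≥ 1 and k ≥ 0, the identity ∑_{β ∈ ℕⁿ, β₁+⋯+β_n = k} (k! / (β₁!⋯β_n!))² · ∏_{i=1}^{n} (2β_i)! = 4^k · k! · (n/2)_k holds, where (n/2)_k is the Pochhammer symbol. (This computes the squared Fock–Fischer norm ‖(x₁² + ⋯ + x_n²)^k‖² of the k-th power of the sum of squares, and also the value ψ_k(1,…,1) of the L-invariant polynomial ψ_k.) -/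
lemma sum_antidiagonalTuple_succ {M : Type*} [AddCommMonoid M] (n k : ℕ)
    (f : (Fin (n + 1) → ℕ) → M) :
    ∑ β ∈ Finset.Nat.antidiagonalTuple (n + 1) k, f β =
      ∑ ab ∈ Finset.HasAntidiagonal.antidiagonal k, ∑ γ ∈ Finset.Nat.antidiagonalTuple n ab.2,
        f (Fin.cons ab.1 γ) := by
  rw [Finset.sum_sigma']
  refine Finset.sum_bij' (fun β _ => (⟨(β 0, ∑ i : Fin n, β i.succ), Fin.tail β⟩ :
      (_ : ℕ × ℕ) × (Fin n → ℕ)))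
    (fun p _ => Fin.cons p.1.1 p.2) ?_ ?_ ?_ ?_ ?_
  · intro β hβ
    simp only [Finset.Nat.mem_antidiagonalTuple] at hβ
    simp only [Finset.mem_sigma, Finset.HasAntidiagonal.mem_antidiagonal,
      Finset.Nat.mem_antidiagonalTuple]
    refine ⟨?_, rfl⟩
    rw [← hβ, Fin.sum_univ_succ]
  · rintro ⟨⟨a, b⟩, γ⟩ hp
    simp only [Finset.mem_sigma, Finset.HasAntidiagonal.mem_antidiagonal,
      Finset.Nat.mem_antidiagonalTuple] at hp ⊢
    rw [Fin.sum_cons, hp.2, hp.1]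
  · intro β hβ
    exact Fin.cons_self_tail β
  · rintro ⟨⟨a, b⟩, γ⟩ hp
    simp only [Finset.mem_sigma, Finset.HasAntidiagonal.mem_antidiagonal,
      Finset.Nat.mem_antidiagonalTuple] at hp
    ext : 1
    · simp [hp.2]
    · simp [Fin.tail_cons]
  · intro β hβ
    rw [Fin.cons_self_tail β]


lemma half_asc (a : ℕ) :
    (4 : ℝ) ^ a * a.factorial * (ascPochhammer ℝ a).eval (1 / 2) =
      ((2 * a).factorial : ℝ) := by
  induction a with
  | zero => simp
  | succ a ih =>
    rw [ascPochhammer_succ_eval]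
    have h2 : 2 * (a + 1) = (2 * a + 1) + 1 := by ring
    rw [h2, Nat.factorial_succ, Nat.factorial_succ, Nat.factorial_succ]
    push_cast
    rw [← ih]; ring

lemma desc_smeval_eq_eval (r : ℝ) (k : ℕ) :
    (descPochhammer ℤ k).smeval r = (descPochhammer ℝ k).eval r := by
  rw [Polynomial.descPochhammer_smeval_eq_ascPochhammer,
    Polynomial.ascPochhammer_smeval_eq_eval,
    descPochhammer_eval_eq_ascPochhammer]

lemma asc_vandermonde (x y : ℝ) (k : ℕ) :
    ∑ ab ∈ Finset.HasAntidiagonal.antidiagonal k, (k.choose ab.1 : ℝ) *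
      ((ascPochhammer ℝ ab.1).eval x * (ascPochhammer ℝ ab.2).eval y) =
      (ascPochhammer ℝ k).eval (x + y) := by
  have hd := Ring.descPochhammer_smeval_add (R := ℝ) (r := -x) (s := -y) k
    (Commute.all _ _)
  simp only [desc_smeval_eq_eval] at hd
  have hx : ∀ (m : ℕ) (z : ℝ), (ascPochhammer ℝ m).eval z =
      (-1) ^ m * (descPochhammer ℝ m).eval (-z) := by
    intro m z
    rw [show z = -(-z) by ring, ascPochhammer_eval_neg_eq_descPochhammer]
    ring_nf
  rw [hx k (x + y), show -(x + y) = -x + -y by ring, hd, Finset.mul_sum]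
  refine Finset.sum_congr rfl fun ab hab => ?_
  rw [hx ab.1 x, hx ab.2 y, ← Finset.HasAntidiagonal.mem_antidiagonal.mp hab, pow_add]
  ring

open Finset Polynomial

lemma main_aux (n : ℕ) (hn : 1 ≤ n) : ∀ k : ℕ,
    ∑ β ∈ Finset.Nat.antidiagonalTuple n k,
        ((k.factorial : ℝ) / ∏ i, ((β i).factorial : ℝ)) ^ 2 *
          ∏ i, ((2 * β i).factorial : ℝ) =
      4 ^ k * (k.factorial : ℝ) * (ascPochhammer ℝ k).eval ((n : ℝ) / 2) := by
  induction n, hn using Nat.le_induction with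
  | base =>
    intro k
    rw [Finset.Nat.antidiagonalTuple_one, Finset.sum_singleton]
    simp only [Fin.prod_univ_one, Matrix.cons_val_zero]
    rw [div_self (by positivity), one_pow, one_mul, Nat.cast_one]
    rw [← half_asc k]
  | succ n hn ih =>
    intro k
    rw [sum_antidiagonalTuple_succ]
    have step1 : ∀ ab ∈ Finset.HasAntidiagonal.antidiagonal k,
        (∑ γ ∈ Finset.Nat.antidiagonalTuple n ab.2,
          ((k.factorial : ℝ) / ∏ i, (((Fin.cons ab.1 γ : Fin (n+1) → ℕ) i).factorial : ℝ)) ^ 2 *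
            ∏ i, ((2 * (Fin.cons ab.1 γ : Fin (n+1) → ℕ) i).factorial : ℝ)) =
        4 ^ k * (k.factorial : ℝ) * ((k.choose ab.1 : ℝ) *
          ((ascPochhammer ℝ ab.1).eval (1/2) * (ascPochhammer ℝ ab.2).eval ((n : ℝ)/2))) := by
      rintro ⟨a, b⟩ hab
      rw [Finset.HasAntidiagonal.mem_antidiagonal] at hab
      have ha : a ≤ k := hab ▸ Nat.le_add_right a b
      have hC : ((k.choose a : ℝ)) * a.factorial * b.factorial = k.factorial := by
        have := Nat.choose_mul_factorial_mul_factorial ha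
        rw [show k - a = b from by omega] at this
        exact_mod_cast this
      have key : (∑ γ ∈ Finset.Nat.antidiagonalTuple n b,
          ((k.factorial : ℝ) / ∏ i, (((Fin.cons a γ : Fin (n+1) → ℕ) i).factorial : ℝ)) ^ 2 *
            ∏ i, ((2 * (Fin.cons a γ : Fin (n+1) → ℕ) i).factorial : ℝ)) =
          ((k.factorial : ℝ) / ((a.factorial : ℝ) * b.factorial)) ^ 2 * (2*a).factorial *
            ∑ γ ∈ Finset.Nat.antidiagonalTuple n b,
              ((b.factorial : ℝ) / ∏ i, ((γ i).factorial : ℝ)) ^ 2 *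
                ∏ i, ((2 * γ i).factorial : ℝ) := by
        rw [Finset.mul_sum]
        refine Finset.sum_congr rfl fun γ hγ => ?_
        have h0 : ∀ (g : ℕ → ℝ), (∏ i : Fin (n+1), g ((Fin.cons a γ : Fin (n+1) → ℕ) i)) =
            g a * ∏ i : Fin n, g (γ i) := by
          intro g
          rw [Fin.prod_univ_succ]
          simp
        rw [h0 (fun m => (m.factorial : ℝ)), h0 (fun m => ((2*m).factorial : ℝ))]
        have hP : (∏ i : Fin n, ((γ i).factorial : ℝ)) ≠ 0 := by positivity
        have ha' : ((a.factorial : ℝ)) ≠ 0 := by positivity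
        have hb' : ((b.factorial : ℝ)) ≠ 0 := by positivity
        field_simp
      rw [key, ih b]
      rw [← half_asc a, ← hC]
      have h4 : (4:ℝ)^a * 4^b = 4^k := by rw [← pow_add, hab]
      have ha' : ((a.factorial : ℝ)) ≠ 0 := by positivity
      have hb' : ((b.factorial : ℝ)) ≠ 0 := by positivity
      rw [← h4]
      field_simp
    rw [Finset.sum_congr rfl step1, ← Finset.mul_sum, asc_vandermonde]
    have : ((n:ℝ) + 1)/2 = 1/2 + (n:ℝ)/2 := by ring
    push_cast
    rw [this]
/-- For all integers `n ≥ 1` and `k ≥ 0`: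
`∑_{β ∈ ℕⁿ, |β| = k} (k!/β!)² ∏ᵢ (2βᵢ)! = 4^k · k! · (n/2)_k`,
where `(n/2)_k` is the Pochhammer symbol.  This computes the squared Fock–Fischer norm
`‖(x₁² + ⋯ + x_n²)^k‖²` and the value `ψ_k(1,…,1)`. -/
theorem sum_of_squares_norm (n : ℕ) (hn : 1 ≤ n) (k : ℕ) :
    ∑ β ∈ Finset.Nat.antidiagonalTuple n k,
        ((k.factorial : ℝ) / ∏ i, ((β i).factorial : ℝ)) ^ 2 *
          ∏ i, ((2 * β i).factorial : ℝ) =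
      4 ^ k * (k.factorial : ℝ) * (ascPochhammer ℝ k).eval ((n : ℝ) / 2) := by
  exact main_aux n hn k
end

section
/- Let n, m be positive integers and set a = (m−1)/2 + (n−m)/4, b = 1/2 + (n−m)/4, c = 1/2 − (n−m)/4 (real numbers). Define for each integer k ≥ 0: A'_k = k(k + b + c − 1), C'_k = (k + a + b)(k + a + c), B'_k = −(A'_k + C'_k), and A_k = 4k⁴ + (4(m−2) + 2(n−m))k³ + ((m² − 4m + 4) + (n−m)(m−2))k², B_k = −2k² − ((n+m)/2)k − mn/4, C_k = 1/4. Then for all k ≥ 0: A_{k+1}·C_k = A'_{k+1}·C'_k and B_k = B'_k. (These match the Jacobi coefficients of the Casimir action on L-invariants with the three-term recurrence coefficients of the continuous dual Hahn polynomials S_k(x²; a, b, c).) -/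
/-- With `a = (m−1)/2 + (n−m)/4`, `b = 1/2 + (n−m)/4`, `c = 1/2 − (n−m)/4`, the
recurrence coefficients `A'_k = k(k + b + c − 1)`, `C'_k = (k + a + b)(k + a + c)`,
`B'_k = −(A'_k + C'_k)` of the continuous dual Hahn polynomials match the Jacobi
coefficients `A_k, B_k, C_k` of the Casimir action on `L`-invariants via
`A_{k+1}·C_k = A'_{k+1}·C'_k` and `B_k = B'_k`. -/
theorem jacobi_coefficients_match (n m : ℕ) (hn : 0 < n) (hm : 0 < m)
    (a b c : ℝ)
    (ha : a = ((m : ℝ) - 1) / 2 + ((n : ℝ) - (m : ℝ)) / 4)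
    (hb : b = 1 / 2 + ((n : ℝ) - (m : ℝ)) / 4)
    (hc : c = 1 / 2 - ((n : ℝ) - (m : ℝ)) / 4)
    (A' B' C' A B C : ℕ → ℝ)
    (hA' : ∀ j : ℕ, A' j = (j : ℝ) * ((j : ℝ) + b + c - 1))
    (hC' : ∀ j : ℕ, C' j = ((j : ℝ) + a + b) * ((j : ℝ) + a + c))
    (hB' : ∀ j : ℕ, B' j = -(A' j + C' j))
    (hA : ∀ j : ℕ, A j = 4 * (j : ℝ) ^ 4 +
        (4 * ((m : ℝ) - 2) + 2 * ((n : ℝ) - (m : ℝ))) * (j : ℝ) ^ 3 +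
        (((m : ℝ) ^ 2 - 4 * (m : ℝ) + 4) + ((n : ℝ) - (m : ℝ)) * ((m : ℝ) - 2)) * (j : ℝ) ^ 2)
    (hB : ∀ j : ℕ, B j = -2 * (j : ℝ) ^ 2 - (((n : ℝ) + (m : ℝ)) / 2) * (j : ℝ) -
        (m : ℝ) * (n : ℝ) / 4)
    (hC : ∀ j : ℕ, C j = 1 / 4)
    (k : ℕ) :
    A (k + 1) * C k = A' (k + 1) * C' k ∧ B k = B' k := by
  subst ha hb hc
  refine ⟨?_, ?_⟩ <;>
    simp only [hA, hB, hC, hA', hB', hC', Nat.cast_add, Nat.cast_one] <;> ring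
end

section
/- Fix integers n ≥ m ≥ 1 and let z be a real (n−m)×m matrix. Let X_z be the real (n+m)×(n+m) matrix with 3×3 block form (block sizes m, n−m, m along rows and columns): X_z = [[0, zᵀ, 0], [−z, 0, z], [0, zᵀ, 0]]. Then X_z³ = 0 and the matrix exponential satisfies exp(X_z) = [[I_m − zᵀz/2, zᵀ, zᵀz/2], [−z, I_{n−m}, z], [−zᵀz/2, zᵀ, I_m + zᵀz/2]]. -/
open Matrix

/-- A real `(n+m)×(n+m)` matrix written in `3×3` block form with diagonal blocks of
sizes `m`, `p = n−m`, `m`. -/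
def blocks3 {m p : ℕ}
    (M11 : Matrix (Fin m) (Fin m) ℝ) (M12 : Matrix (Fin m) (Fin p) ℝ)
    (M13 : Matrix (Fin m) (Fin m) ℝ)
    (M21 : Matrix (Fin p) (Fin m) ℝ) (M22 : Matrix (Fin p) (Fin p) ℝ)
    (M23 : Matrix (Fin p) (Fin m) ℝ)
    (M31 : Matrix (Fin m) (Fin m) ℝ) (M32 : Matrix (Fin m) (Fin p) ℝ)
    (M33 : Matrix (Fin m) (Fin m) ℝ) :
    Matrix ((Fin m ⊕ Fin p) ⊕ Fin m) ((Fin m ⊕ Fin p) ⊕ Fin m) ℝ :=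
  Matrix.fromBlocks (Matrix.fromBlocks M11 M12 M21 M22) (Matrix.fromRows M13 M23)
    (Matrix.fromCols M31 M32) M33

section aux

variable {m p : ℕ}
variable (A11 B11 : Matrix (Fin m) (Fin m) ℝ) (A12 B12 : Matrix (Fin m) (Fin p) ℝ)
    (A13 B13 : Matrix (Fin m) (Fin m) ℝ)
    (A21 B21 : Matrix (Fin p) (Fin m) ℝ) (A22 B22 : Matrix (Fin p) (Fin p) ℝ)
    (A23 B23 : Matrix (Fin p) (Fin m) ℝ)
    (A31 B31 : Matrix (Fin m) (Fin m) ℝ) (A32 B32 : Matrix (Fin m) (Fin p) ℝ)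
    (A33 B33 : Matrix (Fin m) (Fin m) ℝ)

lemma blocks3_mul :
    blocks3 A11 A12 A13 A21 A22 A23 A31 A32 A33 *
      blocks3 B11 B12 B13 B21 B22 B23 B31 B32 B33 =
    blocks3 (A11*B11+A12*B21+A13*B31) (A11*B12+A12*B22+A13*B32) (A11*B13+A12*B23+A13*B33)
      (A21*B11+A22*B21+A23*B31) (A21*B12+A22*B22+A23*B32) (A21*B13+A22*B23+A23*B33)
      (A31*B11+A32*B21+A33*B31) (A31*B12+A32*B22+A33*B32) (A31*B13+A32*B23+A33*B33) := by
  simp only [blocks3, fromBlocks_multiply, fromRows_mul_fromCols, fromBlocks_mul_fromRows,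
    fromCols_mul_fromBlocks, fromRows_mul, mul_fromCols, fromBlocks_add,
    fromCols_mul_fromRows]
  ext i j
  rcases i with (i|i)|i <;> rcases j with (j|j)|j <;> simp [Matrix.add_apply, add_assoc]

lemma blocks3_add :
    blocks3 A11 A12 A13 A21 A22 A23 A31 A32 A33 +
      blocks3 B11 B12 B13 B21 B22 B23 B31 B32 B33 =
    blocks3 (A11+B11) (A12+B12) (A13+B13) (A21+B21) (A22+B22) (A23+B23)
      (A31+B31) (A32+B32) (A33+B33) := by
  ext i j
  rcases i with (i|i)|i <;> rcases j with (j|j)|j <;> simp [blocks3, Matrix.add_apply]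

lemma blocks3_smul (c : ℝ) :
    c • blocks3 A11 A12 A13 A21 A22 A23 A31 A32 A33 =
    blocks3 (c•A11) (c•A12) (c•A13) (c•A21) (c•A22) (c•A23) (c•A31) (c•A32) (c•A33) := by
  ext i j
  rcases i with (i|i)|i <;> rcases j with (j|j)|j <;> simp [blocks3, Matrix.smul_apply]

lemma blocks3_zero : blocks3 (m := m) (p := p) 0 0 0 0 0 0 0 0 0 = 0 := by
  ext i j
  rcases i with (i|i)|i <;> rcases j with (j|j)|j <;> simp [blocks3]

lemma blocks3_one : blocks3 (m := m) (p := p) 1 0 0 0 1 0 0 0 1 = 1 := by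
  ext i j
  rcases i with (i|i)|i <;> rcases j with (j|j)|j <;>
    simp [blocks3, Matrix.one_apply, Sum.inl.injEq, Sum.inr.injEq]

end aux

/-- For a real `(n−m)×m` matrix `z`, the nilpotent matrix
`X_z = [[0, zᵀ, 0], [−z, 0, z], [0, zᵀ, 0]]` (in `3×3` block form with block sizes
`m, n−m, m`, here `p = n−m`) satisfies `X_z³ = 0` and
`exp X_z = [[I − zᵀz/2, zᵀ, zᵀz/2], [−z, I, z], [−zᵀz/2, zᵀ, I + zᵀz/2]]`. -/
theorem exp_of_nilpotent_Xz (m p : ℕ) (hm : 1 ≤ m)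
    (z : Matrix (Fin p) (Fin m) ℝ) :
    (blocks3 0 zᵀ 0 (-z) 0 z 0 zᵀ 0) ^ 3 = 0 ∧
    NormedSpace.exp (blocks3 0 zᵀ 0 (-z) 0 z 0 zᵀ 0) =
      blocks3 (1 - (2 : ℝ)⁻¹ • (zᵀ * z)) zᵀ ((2 : ℝ)⁻¹ • (zᵀ * z))
        (-z) 1 z
        (-((2 : ℝ)⁻¹ • (zᵀ * z))) zᵀ (1 + (2 : ℝ)⁻¹ • (zᵀ * z)) := by
  set X := blocks3 0 zᵀ 0 (-z) 0 z 0 zᵀ 0 with hX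
  have hsq : X ^ 2 = blocks3 (-(zᵀ*z)) 0 (zᵀ*z) 0 0 0 (-(zᵀ*z)) 0 (zᵀ*z) := by
    rw [hX, pow_two, blocks3_mul]
    congr 1 <;> simp [Matrix.mul_neg, Matrix.neg_mul]
  have hcube : X ^ 3 = 0 := by
    rw [pow_succ' , hsq, hX, blocks3_mul, ← blocks3_zero]
    congr 1 <;> simp [Matrix.mul_neg, Matrix.neg_mul]
  refine ⟨hcube, ?_⟩
  have hpow : ∀ n, 3 ≤ n → X ^ n = 0 := fun n hn => pow_eq_zero_of_le hn hcube
  have hexp : NormedSpace.exp X = ∑' (n : ℕ), ((n.factorial : ℝ)⁻¹) • X ^ n :=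
    congrFun (NormedSpace.exp_eq_tsum ℝ) X
  have hts : ∑' (n : ℕ), ((n.factorial : ℝ)⁻¹) • X ^ n
      = ∑ n ∈ Finset.range 3, ((n.factorial : ℝ)⁻¹) • X ^ n := by
    refine tsum_eq_sum fun n hn => ?_
    rw [hpow n (by simpa using Finset.mem_range.not.mp hn), smul_zero]
  rw [hexp, hts, Finset.sum_range_succ, Finset.sum_range_succ, Finset.sum_range_one, hsq]
  simp only [pow_zero, pow_one, Nat.factorial]
  norm_num
  rw [hX, ← blocks3_one, blocks3_add, blocks3_smul, blocks3_add]
  congr 1 <;> simp [smul_smul, smul_neg, sub_eq_add_neg] <;> ring_nf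
end

section
/- Fix integers n ≥ m ≥ 1 and t ∈ ℝ^m. Let a(t) be the real (n+m)×(n+m) matrix with 3×3 block form (block sizes m, n−m, m): a(t) = [[Δ(cosh t), 0, Δ(sinh t)], [0, I_{n−m}, 0], [Δ(sinh t), 0, Δ(cosh t)]], where Δ(cosh t) is the diagonal m×m matrix with entries cosh t₁, …, cosh t_m (similarly for sinh). Let E = [[I_m, 0, I_m], [0, I_{n−m}, 0], [0, 0, I_m]]. Write the product a(t)·E in 2×2 block form [[A, B], [C, D]] with A of size n×n and D of size m×m. Then: (i) D = Δ(e^t) (the diagonal matrix with entries e^{t_j}), which is invertible; (ii) A − B·D⁻¹·C is the n×n diagonal matrix with entries e^{−t₁}, …, e^{−t_m}, 1, …, 1; and (iii) the determinant of the ℝ-linear endomorphism Y ↦ (A − B·D⁻¹·C)·Y·D⁻¹ of the space of real n×m matrices equals e^{−(n+m)(t₁ + ⋯ + t_m)}. -/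
open Matrix

/-- The `ℝ`-linear endomorphism `Y ↦ K·Y·N` of the space of real `n×m` matrices
(`n = m + p`). -/
def sandwichMap (m p : ℕ)
    (K : Matrix (Fin m ⊕ Fin p) (Fin m ⊕ Fin p) ℝ) (N : Matrix (Fin m) (Fin m) ℝ) :
    Matrix (Fin m ⊕ Fin p) (Fin m) ℝ →ₗ[ℝ] Matrix (Fin m ⊕ Fin p) (Fin m) ℝ where
  toFun Y := K * Y * N
  map_add' Y₁ Y₂ := by simp [Matrix.mul_add, Matrix.add_mul]
  map_smul' c Y := by simp [Matrix.mul_smul, Matrix.smul_mul]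

lemma det_sandwich_aux (m p : ℕ) (d : Fin m ⊕ Fin p → ℝ) (e : Fin m → ℝ) :
    LinearMap.det (sandwichMap m p (Matrix.diagonal d) (Matrix.diagonal e)) =
      ∏ ij : (Fin m ⊕ Fin p) × Fin m, d ij.1 * e ij.2 := by
  classical
  set b := Matrix.stdBasis ℝ (Fin m ⊕ Fin p) (Fin m) with hb
  rw [← LinearMap.det_toMatrix b]
  have key : ∀ ij : (Fin m ⊕ Fin p) × Fin m,
      (sandwichMap m p (Matrix.diagonal d) (Matrix.diagonal e)) (b ij)
        = (d ij.1 * e ij.2) • b ij := by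
    rintro ⟨i, j⟩
    simp only [hb, Matrix.stdBasis_eq_single, sandwichMap, LinearMap.coe_mk,
      AddHom.coe_mk]
    ext a c
    simp only [Matrix.mul_diagonal, Matrix.diagonal_mul, Matrix.smul_apply,
      Matrix.single, Matrix.of_apply, smul_eq_mul]
    by_cases hai : a = i <;> by_cases hcj : c = j <;> simp [hai, hcj] <;>
      split_ifs <;> simp_all <;> ring
  have hM : LinearMap.toMatrix b b (sandwichMap m p (Matrix.diagonal d) (Matrix.diagonal e))
      = Matrix.diagonal (fun ij => d ij.1 * e ij.2) := by
    ext ij' ij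
    rw [LinearMap.toMatrix_apply, key, _root_.map_smul, Finsupp.smul_apply, Module.Basis.repr_self]
    rcases eq_or_ne ij' ij with h | h
    · subst h; simp
    · simp [Finsupp.single_apply, Ne.symm h, Matrix.diagonal_apply_ne _ h]
  rw [hM, Matrix.det_diagonal]

/-- Let `a(t) = [[Δ(cosh t), 0, Δ(sinh t)], [0, I, 0], [Δ(sinh t), 0, Δ(cosh t)]]` and
`E = [[I, 0, I], [0, I, 0], [0, 0, I]]` (in `3×3` block form with block sizes
`m, p = n−m, m`), and write `a(t)·E` in `2×2` block form `[[A, B], [C, D]]` with `A` of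
size `n×n` and `D` of size `m×m`.  Then (i) `D = Δ(e^t)` is invertible, (ii)
`A − B·D⁻¹·C` is the diagonal matrix with entries `e^{−t₁}, …, e^{−t_m}, 1, …, 1`, and
(iii) the determinant of the `ℝ`-linear endomorphism `Y ↦ (A − B·D⁻¹·C)·Y·D⁻¹` equals
`e^{−(n+m)(t₁ + ⋯ + t_m)}`. -/
theorem jacobian_of_A_at_shilov_point (m p : ℕ) (hm : 1 ≤ m) (t : Fin m → ℝ)
    (a E P : Matrix ((Fin m ⊕ Fin p) ⊕ Fin m) ((Fin m ⊕ Fin p) ⊕ Fin m) ℝ)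
    (ha : a = blocks3 (Matrix.diagonal fun i => Real.cosh (t i)) 0
        (Matrix.diagonal fun i => Real.sinh (t i)) 0 1 0
        (Matrix.diagonal fun i => Real.sinh (t i)) 0
        (Matrix.diagonal fun i => Real.cosh (t i)))
    (hE : E = blocks3 1 0 1 0 1 0 0 0 1)
    (hP : P = a * E) :
    P.toBlocks₂₂ = Matrix.diagonal (fun j => Real.exp (t j)) ∧
    IsUnit P.toBlocks₂₂ ∧
    P.toBlocks₁₁ - P.toBlocks₁₂ * (P.toBlocks₂₂)⁻¹ * P.toBlocks₂₁ =
      Matrix.fromBlocks (Matrix.diagonal fun j => Real.exp (-t j)) 0 0 1 ∧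
    LinearMap.det
        (sandwichMap m p (P.toBlocks₁₁ - P.toBlocks₁₂ * (P.toBlocks₂₂)⁻¹ * P.toBlocks₂₁)
          (P.toBlocks₂₂)⁻¹) =
      Real.exp (-(((m : ℝ) + (p : ℝ)) + (m : ℝ)) * ∑ j, t j) := by
  classical
  -- Compute the product `P = a * E` explicitly in block form.
  have hd : (Matrix.diagonal fun i => Real.cosh (t i)) + (Matrix.diagonal fun i => Real.sinh (t i))
      = Matrix.diagonal fun i => Real.exp (t i) := by
    rw [Matrix.diagonal_add]; simp [Real.cosh_add_sinh]
  have hr : ∀ (A B : Matrix (Fin m) (Fin m) ℝ) (C D : Matrix (Fin p) (Fin m) ℝ),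
      Matrix.fromRows A C + Matrix.fromRows B D = Matrix.fromRows (A + B) (C + D) := by
    intro A B C D; ext (i | i) j <;> simp
  have hEb : E = Matrix.fromBlocks 1 (Matrix.fromRows 1 0) 0 1 := by
    rw [hE]
    unfold blocks3
    rw [Matrix.fromCols_zero, Matrix.fromBlocks_one]
  have hPb : P = Matrix.fromBlocks
      (Matrix.fromBlocks (Matrix.diagonal fun i => Real.cosh (t i)) 0 0 1)
      (Matrix.fromRows (Matrix.diagonal fun i => Real.exp (t i)) 0)
      (Matrix.fromCols (Matrix.diagonal fun i => Real.sinh (t i)) 0)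
      (Matrix.diagonal fun i => Real.exp (t i)) := by
    rw [hP, ha, hEb]
    unfold blocks3
    rw [Matrix.fromBlocks_multiply]
    simp [Matrix.fromBlocks_mul_fromRows, Matrix.fromRows_mul, Matrix.fromCols_mul_fromRows,
      hr, hd]
  have hD : P.toBlocks₂₂ = Matrix.diagonal (fun j => Real.exp (t j)) := by
    rw [hPb]; rfl
  have hDinv : (P.toBlocks₂₂)⁻¹ = Matrix.diagonal fun j => Real.exp (-t j) := by
    rw [hD]
    apply Matrix.inv_eq_right_inv
    rw [Matrix.diagonal_mul_diagonal]
    simp [← Real.exp_add]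
  have hDunit : IsUnit P.toBlocks₂₂ := by
    rw [hD, Matrix.isUnit_iff_isUnit_det, Matrix.det_diagonal]
    exact (Finset.prod_pos fun j _ => Real.exp_pos (t j)).ne'.isUnit
  have hA : P.toBlocks₁₁ = Matrix.fromBlocks (Matrix.diagonal fun i => Real.cosh (t i)) 0 0 1 := by
    rw [hPb]; rfl
  have hB : P.toBlocks₁₂ = Matrix.fromRows (Matrix.diagonal fun i => Real.exp (t i)) 0 := by
    rw [hPb]; rfl
  have hC : P.toBlocks₂₁ = Matrix.fromCols (Matrix.diagonal fun i => Real.sinh (t i)) 0 := by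
    rw [hPb]; rfl
  have hSchur : P.toBlocks₁₁ - P.toBlocks₁₂ * (P.toBlocks₂₂)⁻¹ * P.toBlocks₂₁ =
      Matrix.fromBlocks (Matrix.diagonal fun j => Real.exp (-t j)) 0 0 1 := by
    rw [hA, hB, hC, hDinv, Matrix.fromRows_mul, Matrix.fromRows_mul_fromCols,
      Matrix.diagonal_mul_diagonal]
    have h1 : (fun i => Real.exp (t i) * Real.exp (-t i)) = fun _ : Fin m => (1 : ℝ) := by
      funext i; rw [← Real.exp_add]; simp
    have hce : (Matrix.diagonal fun i => Real.cosh (t i)) +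
        -(Matrix.diagonal fun i => Real.sinh (t i)) =
        Matrix.diagonal fun j => Real.exp (-t j) := by
      rw [← sub_eq_add_neg, Matrix.diagonal_sub]
      simp [Real.cosh_sub_sinh]
    rw [h1, Matrix.diagonal_one, Matrix.one_mul, Matrix.zero_mul, Matrix.zero_mul,
      sub_eq_add_neg, Matrix.fromBlocks_neg, Matrix.fromBlocks_add, hce]
    simp
  refine ⟨hD, hDunit, hSchur, ?_⟩
  rw [hSchur, hDinv]
  have hKdiag : (Matrix.fromBlocks (Matrix.diagonal fun j => Real.exp (-t j)) 0 0
      (1 : Matrix (Fin p) (Fin p) ℝ)) =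
      Matrix.diagonal (Sum.elim (fun j => Real.exp (-t j)) (fun _ => (1 : ℝ))) := by
    rw [← Matrix.diagonal_one, Matrix.fromBlocks_diagonal]
  rw [hKdiag, det_sandwich_aux]
  -- Now compute the product.
  have hfac : ∀ ij : (Fin m ⊕ Fin p) × Fin m,
      Sum.elim (fun j => Real.exp (-t j)) (fun _ => (1 : ℝ)) ij.1 * Real.exp (-t ij.2) =
      Real.exp (Sum.elim (fun j => -t j) (fun _ => (0 : ℝ)) ij.1 + (-t ij.2)) := by
    rintro ⟨(i | i), j⟩ <;> simp [Real.exp_add]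
  rw [Finset.prod_congr rfl fun ij _ => hfac ij, ← Real.exp_sum]
  congr 1
  rw [Fintype.sum_prod_type]
  simp only [Finset.sum_add_distrib, Finset.sum_const, Finset.card_univ, Fintype.card_fin,
    nsmul_eq_mul, Fintype.sum_sum_type, Sum.elim_inl, Sum.elim_inr, Finset.sum_neg_distrib]
  simp only [← neg_mul, ← Finset.mul_sum, Fintype.card_sum, Fintype.card_fin,
    Finset.sum_neg_distrib]
  push_cast
  ring
end

section
/- Let A be an n×n, B an n×m, C an m×n, and D an m×m complex matrix, and let z₀ be an n×m complex matrix such that C·z₀ + D is invertible. Then the map F : M_{n,m}(ℂ) → M_{n,m}(ℂ), F(z) = (A·z + B)·(C·z + D)⁻¹, is Fréchet differentiable at z₀ with derivative given by the linear map Y ↦ (A − (A·z₀ + B)·(C·z₀ + D)⁻¹·C) · Y · (C·z₀ + D)⁻¹. -/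
open Matrix

attribute [local instance] Matrix.normedAddCommGroup Matrix.normedSpace

/-- The `ℂ`-linear endomorphism `Y ↦ K·Y·N` of the space of complex `n×m` matrices. -/
noncomputable def sandwichMapC (n m : ℕ) (K : Matrix (Fin n) (Fin n) ℂ) (N : Matrix (Fin m) (Fin m) ℂ) :
    Matrix (Fin n) (Fin m) ℂ →ₗ[ℂ] Matrix (Fin n) (Fin m) ℂ where
  toFun Y := K * Y * N
  map_add' Y₁ Y₂ := by simp [Matrix.mul_add, Matrix.add_mul]
  map_smul' c Y := by simp [Matrix.mul_smul, Matrix.smul_mul]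

/-- Entrywise sup norm of a product is bounded by (inner dimension) × product of norms. -/
lemma norm_matrix_mul_le {a b c : ℕ} (X : Matrix (Fin a) (Fin b) ℂ)
    (Y : Matrix (Fin b) (Fin c) ℂ) : ‖X * Y‖ ≤ b * ‖X‖ * ‖Y‖ := by
  rw [Matrix.norm_le_iff (by positivity)]
  intro i j
  calc ‖(X * Y) i j‖ = ‖∑ k, X i k * Y k j‖ := by rw [Matrix.mul_apply]
    _ ≤ ∑ k, ‖X i k * Y k j‖ := norm_sum_le _ _
    _ ≤ ∑ _k : Fin b, ‖X‖ * ‖Y‖ := by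
        refine Finset.sum_le_sum fun k _ => ?_
        rw [norm_mul]
        exact mul_le_mul (Matrix.norm_entry_le_entrywise_sup_norm X)
          (Matrix.norm_entry_le_entrywise_sup_norm Y) (norm_nonneg _) (norm_nonneg _)
    _ = b * ‖X‖ * ‖Y‖ := by simp [mul_assoc]

set_option maxHeartbeats 1000000 in
/-- The fractional linear (Möbius) map `F(z) = (A·z + B)·(C·z + D)⁻¹` is Fréchet
differentiable at any point `z₀` where `C·z₀ + D` is invertible, with derivative
`Y ↦ (A − (A·z₀ + B)·(C·z₀ + D)⁻¹·C)·Y·(C·z₀ + D)⁻¹`. -/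
theorem mobius_map_hasFDerivAt (n m : ℕ)
    (A : Matrix (Fin n) (Fin n) ℂ) (B : Matrix (Fin n) (Fin m) ℂ)
    (C : Matrix (Fin m) (Fin n) ℂ) (D : Matrix (Fin m) (Fin m) ℂ)
    (z₀ : Matrix (Fin n) (Fin m) ℂ) (h : IsUnit (C * z₀ + D)) :
    HasFDerivAt (fun z : Matrix (Fin n) (Fin m) ℂ => (A * z + B) * (C * z + D)⁻¹)
      (LinearMap.toContinuousLinearMap
        (sandwichMapC n m (A - (A * z₀ + B) * (C * z₀ + D)⁻¹ * C) (C * z₀ + D)⁻¹))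
      z₀ := by
  classical
  set M : Matrix (Fin m) (Fin m) ℂ := C * z₀ + D with hMdef
  have hdet : IsUnit M.det := (Matrix.isUnit_iff_isUnit_det M).mp h
  have hMinv : M⁻¹ * M = 1 := Matrix.nonsing_inv_mul M hdet
  set P : Matrix (Fin n) (Fin m) ℂ := (A * z₀ + B) * M⁻¹ with hPdef
  set K : Matrix (Fin n) (Fin n) ℂ := A - P * C with hKdef
  have hP : P * M = A * z₀ + B := by
    rw [hPdef, Matrix.mul_assoc, hMinv, Matrix.mul_one]
  -- continuity of the affine map and of the inverse
  have hcontAff : Continuous fun z : Matrix (Fin n) (Fin m) ℂ => C * z + D :=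
    ((continuous_const.matrix_mul continuous_id).add continuous_const)
  have hcontInv : ContinuousAt (fun z : Matrix (Fin n) (Fin m) ℂ => (C * z + D)⁻¹) z₀ := by
    have h1 : ContinuousAt Inv.inv M :=
      continuousAt_matrix_inv M (NormedRing.inverse_continuousAt hdet.unit)
    exact h1.comp hcontAff.continuousAt
  -- eventual invertibility
  have hcontDet : ContinuousAt (fun z : Matrix (Fin n) (Fin m) ℂ => (C * z + D).det) z₀ :=
    (hcontAff.matrix_det).continuousAt
  have hev : ∀ᶠ z in nhds z₀, IsUnit (C * z + D).det := by
    have hne : M.det ≠ 0 := by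
      intro h0
      rw [h0] at hdet
      exact (by simpa using hdet : IsUnit (0 : ℂ)).ne_zero rfl
    filter_upwards [hcontDet.eventually_ne hne] with z hz
    exact isUnit_iff_ne_zero.mpr hz
  refine hasFDerivAt_iff_isLittleO.mpr ?_
  have hcoe : ∀ Y : Matrix (Fin n) (Fin m) ℂ,
      (LinearMap.toContinuousLinearMap
        (sandwichMapC n m K M⁻¹)) Y = K * Y * M⁻¹ := fun Y => by
    rw [LinearMap.coe_toContinuousLinearMap']; rfl
  -- identify the residual eventually
  have hEq : ∀ᶠ z in nhds z₀,
      (A * z + B) * (C * z + D)⁻¹ - (A * z₀ + B) * M⁻¹ -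
        (LinearMap.toContinuousLinearMap (sandwichMapC n m K M⁻¹)) (z - z₀)
      = K * (z - z₀) * ((C * z + D)⁻¹ - M⁻¹) := by
    filter_upwards [hev] with z hz
    have hzinv : (C * z + D) * (C * z + D)⁻¹ = 1 := Matrix.mul_nonsing_inv _ hz
    have e1 : (A * z + B) - P * (C * z + D) = K * (z - z₀) := by
      have : (A * z + B) - P * (C * z + D) =
          (A * z + B) - P * (C * z + D) - ((A * z₀ + B) - P * M) := by
        rw [hP, sub_self, sub_zero]
      rw [this, hKdef, hMdef]
      simp only [Matrix.mul_add, Matrix.add_mul, Matrix.sub_mul, Matrix.mul_sub,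
        Matrix.mul_assoc]
      abel
    have e2 : (A * z + B) * (C * z + D)⁻¹ - (A * z₀ + B) * M⁻¹
        = K * (z - z₀) * (C * z + D)⁻¹ := by
      have : (A * z + B) * (C * z + D)⁻¹ - (A * z₀ + B) * M⁻¹
          = ((A * z + B) - P * (C * z + D)) * (C * z + D)⁻¹ := by
        rw [Matrix.sub_mul, Matrix.mul_assoc, hzinv, Matrix.mul_one, hPdef]
      rw [this, e1]
    rw [hcoe, e2, ← Matrix.mul_sub]
  refine (Asymptotics.isLittleO_iff.mpr fun c hc => ?_).congr'
    (Filter.EventuallyEq.symm hEq) (Filter.EventuallyEq.refl _ _)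
  have hKn : (0 : ℝ) ≤ (m : ℝ) * n * ‖K‖ := by positivity
  set δ : ℝ := c / ((m : ℝ) * n * ‖K‖ + 1) with hδdef
  have hδ : 0 < δ := by positivity
  have htend : Filter.Tendsto (fun z : Matrix (Fin n) (Fin m) ℂ =>
      (C * z + D)⁻¹ - M⁻¹) (nhds z₀) (nhds 0) := by
    have : Filter.Tendsto (fun z : Matrix (Fin n) (Fin m) ℂ =>
        (C * z + D)⁻¹ - M⁻¹) (nhds z₀) (nhds (M⁻¹ - M⁻¹)) :=
      (hcontInv.tendsto.sub tendsto_const_nhds)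
    simpa using this
  have hsmall : ∀ᶠ z in nhds z₀, ‖(C * z + D)⁻¹ - M⁻¹‖ ≤ δ := by
    refine htend.eventually (p := fun y => ‖y‖ ≤ δ) ?_
    filter_upwards [Metric.closedBall_mem_nhds (0 : Matrix (Fin m) (Fin m) ℂ) hδ] with y hy
    simpa [Metric.mem_closedBall, dist_zero_right] using hy
  filter_upwards [hsmall] with z hz
  have b1 : ‖K * (z - z₀) * ((C * z + D)⁻¹ - M⁻¹)‖
      ≤ (m : ℝ) * ‖K * (z - z₀)‖ * ‖(C * z + D)⁻¹ - M⁻¹‖ := norm_matrix_mul_le _ _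
  have b2 : ‖K * (z - z₀)‖ ≤ (n : ℝ) * ‖K‖ * ‖z - z₀‖ := norm_matrix_mul_le _ _
  have hEnn : (0 : ℝ) ≤ ‖(C * z + D)⁻¹ - M⁻¹‖ := norm_nonneg _
  have b3 : (m : ℝ) * ‖K * (z - z₀)‖ * ‖(C * z + D)⁻¹ - M⁻¹‖
      ≤ (m : ℝ) * ((n : ℝ) * ‖K‖ * ‖z - z₀‖) * δ := by
    apply mul_le_mul _ hz hEnn (by positivity)
    have : (0 : ℝ) ≤ (m : ℝ) := by positivity
    nlinarith [norm_nonneg (K * (z - z₀))]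
  have b4 : (m : ℝ) * ((n : ℝ) * ‖K‖ * ‖z - z₀‖) * δ ≤ c * ‖z - z₀‖ := by
    have hδc : ((m : ℝ) * n * ‖K‖) * δ ≤ c := by
      have he : ((m : ℝ) * n * ‖K‖ + 1) * δ = c := by
        rw [hδdef]; field_simp
      nlinarith [hδ.le]
    nlinarith [norm_nonneg (z - z₀)]
  calc ‖K * (z - z₀) * ((C * z + D)⁻¹ - M⁻¹)‖
      ≤ (m : ℝ) * ‖K * (z - z₀)‖ * ‖(C * z + D)⁻¹ - M⁻¹‖ := b1
    _ ≤ (m : ℝ) * ((n : ℝ) * ‖K‖ * ‖z - z₀‖) * δ := b3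
    _ ≤ c * ‖z - z₀‖ := b4
end
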